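/- Let g : ℝ → (0,∞) be continuous, X₁, X₂, … i.i.d. with mean μ, S_n = X₁ + ⋯ + X_n, and t_a = inf{ n ≥ 1 : n g(S_n/n) ≥ a }. If g(μ) > 0 then a / t_a → g(μ) in probability (indeed almost surely) as a → ∞. -/

import Mathlib

/-!
By the strong law of large numbers `S_n / n → μ` almost surely, so along such a path
`c_n := g(S_n / n) → g(μ) > 0` and `n c_n → ∞`. The first passage time `t_a` of `n c_n` above
`a` is then finite and tends to infinity with `a`, and minimality of `t_a` traps `a` between
`(t_a - 1) c_{t_a - 1}` and `t_a c_{t_a}`; dividing by `t_a` squeezes `a / t_a` to `g(μ)`.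
-/

open MeasureTheory ProbabilityTheory Filter Topology

/-- Equals `0` (the junk value `sInf ∅`) when `f` never reaches `a`. -/
noncomputable def firstPassageTime {α : Type*} [LinearOrder α] (f : ℕ → α) (a : α) : ℕ :=
  sInf {n : ℕ | 1 ≤ n ∧ a ≤ f n}

section FirstPassageTime

variable {α : Type*} [LinearOrder α] {f : ℕ → α}

theorem firstPassageTime_spec (hf : Tendsto f atTop atTop) (a : α) :
    1 ≤ firstPassageTime f a ∧ a ≤ f (firstPassageTime f a) :=
  Nat.sInf_mem ((eventually_ge_atTop 1).and (hf.eventually_ge_atTop a)).exists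

theorem apply_lt_of_lt_firstPassageTime {a : α} {m : ℕ} (hm₁ : 1 ≤ m)
    (hm : m < firstPassageTime f a) : f m < a :=
  not_le.1 fun h => Nat.notMem_of_lt_sInf hm ⟨hm₁, h⟩

theorem tendsto_firstPassageTime_atTop [NoMaxOrder α] (hf : Tendsto f atTop atTop) :
    Tendsto (firstPassageTime f) atTop atTop := by
  refine tendsto_atTop.2 fun N => ?_
  filter_upwards [(Finset.range N).eventually_all.2 fun n _ => eventually_gt_atTop (f n)]
    with a ha
  by_contra! h
  exact (firstPassageTime_spec hf a).2.not_gt (ha _ (Finset.mem_range.2 h))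

end FirstPassageTime

theorem tendsto_div_firstPassageTime {c : ℕ → ℝ} {L : ℝ} (hL : 0 < L)
    (hc : Tendsto c atTop (𝓝 L)) :
    Tendsto (fun a => a / firstPassageTime (fun n => n * c n) a) atTop (𝓝 L) := by
  set τ := firstPassageTime (fun n : ℕ => n * c n)
  have hf : Tendsto (fun n : ℕ => n * c n) atTop atTop :=
    tendsto_natCast_atTop_atTop.atTop_mul_pos hL hc
  have hτ : Tendsto τ atTop atTop := tendsto_firstPassageTime_atTop hf
  have hlower : Tendsto (fun a => (τ a - 1 : ℕ) / ((τ a - 1 : ℕ) + 1 : ℝ) * c (τ a - 1))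
      atTop (𝓝 L) := by
    have h := (tendsto_natCast_div_add_atTop (1 : ℝ)).mul hc
    rw [one_mul] at h
    exact h.comp ((tendsto_sub_atTop_nat 1).comp hτ)
  refine tendsto_of_tendsto_of_tendsto_of_le_of_le' hlower (hc.comp hτ) ?_ ?_
  · filter_upwards [hτ.eventually_ge_atTop 2] with a ha
    have hcast : ((τ a - 1 : ℕ) + 1 : ℝ) = τ a := by
      rw [Nat.cast_sub (by omega), Nat.cast_one, sub_add_cancel]
    have hbelow : ((τ a - 1 : ℕ) : ℝ) * c (τ a - 1) < a :=
      apply_lt_of_lt_firstPassageTime (m := τ a - 1) (by omega) (Nat.sub_lt (by omega) one_pos)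
    rw [hcast, div_mul_eq_mul_div]
    gcongr
  · filter_upwards with a
    have hpos : (0 : ℝ) < τ a := by exact_mod_cast (firstPassageTime_spec hf a).1
    rw [div_le_iff₀ hpos, mul_comm]
    exact (firstPassageTime_spec hf a).2

theorem ratio_tendsto_g_mu_general
    {Ω : Type*} [MeasureSpace Ω]
    (X : ℕ → Ω → ℝ)
    (hindep : iIndepFun X)
    (hident : ∀ i, IdentDistrib (X i) (X 0))
    (hint : Integrable (X 0)) (μ : ℝ) (hmean : ∫ ω, X 0 ω = μ)
    (g : ℝ → ℝ) (hg : Continuous g) (hg0 : ∀ x, 0 < g x)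
    (S : ℕ → Ω → ℝ) (hS : ∀ n ω, S n ω = ∑ i ∈ Finset.range n, X i ω)
    (t : ℝ → Ω → ℕ)
    (ht : ∀ a ω, t a ω = sInf {n : ℕ | 1 ≤ n ∧ a ≤ n * g (S n ω / n)}) :
    ∀ᵐ ω, Tendsto (fun a : ℝ => a / (t a ω : ℝ)) atTop (nhds (g μ)) := by
  filter_upwards [strong_law_ae_real X hint (fun i j hij => hindep.indepFun hij) hident]
    with ω hω
  have hSω : Tendsto (fun n : ℕ => S n ω / n) atTop (𝓝 μ) := by
    simpa only [hS, hmean] using hω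
  simp only [ht]
  exact tendsto_div_firstPassageTime (c := fun n => g (S n ω / n)) (hg0 μ)
    ((hg.tendsto μ).comp hSω)

/-- For i.i.d. `X_i` with mean `μ`, a continuous positive `g`, and
`t_a = inf{n ≥ 1 : n g(S_n/n) ≥ a}`: `a / t_a → g(μ)` almost surely (hence in
probability) as `a → ∞`. -/
theorem ratio_tendsto_g_mu
    {Ω : Type*} [MeasureSpace Ω] [IsProbabilityMeasure (volume : Measure Ω)]
    (X : ℕ → Ω → ℝ) (hmeas : ∀ i, StronglyMeasurable (X i))
    (hindep : iIndepFun X)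
    (hident : ∀ i, IdentDistrib (X i) (X 0))
    (hint : Integrable (X 0)) (μ : ℝ) (hmean : ∫ ω, X 0 ω = μ)
    (g : ℝ → ℝ) (hg : Continuous g) (hg0 : ∀ x, 0 < g x)
    (S : ℕ → Ω → ℝ) (hS : ∀ n ω, S n ω = ∑ i ∈ Finset.range n, X i ω)
    (t : ℝ → Ω → ℕ)
    (ht : ∀ a ω, t a ω = sInf {n : ℕ | 1 ≤ n ∧ a ≤ n * g (S n ω / n)}) :
    ∀ᵐ ω, Tendsto (fun a : ℝ => a / (t a ω : ℝ)) atTop (nhds (g μ)) :=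
  ratio_tendsto_g_mu_general X hindep hident hint μ hmean g hg hg0 S hS t ht
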